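/- Let (A, **A**) be a left-accessible Banach operator ideal. Then the A^Δ-local reflexivity principle holds if and only if the A*-local reflexivity principle holds. -/

import Mathlib

noncomputable section

open scoped Classical

universe u

/-- A bundled Banach space over `ℝ`. -/
structure BanachSpc : Type (u + 1) where
  carrier : Type u
  [grp : NormedAddCommGroup carrier]
  [mod : NormedSpace ℝ carrier]
  [cpl : CompleteSpace carrier]

attribute [instance] BanachSpc.grp BanachSpc.mod BanachSpc.cpl

instance : CoeSort BanachSpc.{u} (Type u) := ⟨BanachSpc.carrier⟩

/-- The data of an operator ideal: a class of operators together with an ideal "norm". -/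
structure OperatorIdeal : Type (u + 1) where
  mem : ∀ (E F : BanachSpc.{u}), (E.carrier →L[ℝ] F.carrier) → Prop
  nrm : ∀ (E F : BanachSpc.{u}), (E.carrier →L[ℝ] F.carrier) → ℝ

/-- A finite rank (finite) operator. -/
def FinRankOp {E F : BanachSpc.{u}} (T : E.carrier →L[ℝ] F.carrier) : Prop :=
  FiniteDimensional ℝ (LinearMap.range (T : E.carrier →ₗ[ℝ] F.carrier))

/-- The trace of a (finite rank) operator, computed as the trace of the induced
endomorphism of its range. -/
noncomputable def fTrace {E : BanachSpc.{u}} (T : E.carrier →L[ℝ] E.carrier) : ℝ :=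
  LinearMap.trace ℝ (LinearMap.range (T : E.carrier →ₗ[ℝ] E.carrier))
    ((T : E.carrier →ₗ[ℝ] E.carrier).restrict
      (p := LinearMap.range (T : E.carrier →ₗ[ℝ] E.carrier))
      (q := LinearMap.range (T : E.carrier →ₗ[ℝ] E.carrier))
      (fun x _ => LinearMap.mem_range_self _ x))

/-- `IsPBanachIdeal p A` : `A` is a `p`-Banach operator ideal (`0 < p ≤ 1`). -/
structure IsPBanachIdeal (p : ℝ) (A : OperatorIdeal.{u}) : Prop where
  p_pos : 0 < p
  p_le_one : p ≤ 1
  finrank_mem : ∀ (E F : BanachSpc.{u}) (T : E.carrier →L[ℝ] F.carrier), FinRankOp T → A.mem E F T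
  nonneg : ∀ (E F : BanachSpc.{u}) (T : E.carrier →L[ℝ] F.carrier), 0 ≤ A.nrm E F T
  opnorm_le : ∀ (E F : BanachSpc.{u}) (T : E.carrier →L[ℝ] F.carrier), A.mem E F T → ‖T‖ ≤ A.nrm E F T
  rank_one_le : ∀ (E F : BanachSpc.{u}) (a : E.carrier →L[ℝ] ℝ) (y : F.carrier),
    A.nrm E F (a.smulRight y) ≤ ‖a‖ * ‖y‖
  smul_mem : ∀ (E F : BanachSpc.{u}) (c : ℝ) (T : E.carrier →L[ℝ] F.carrier),
    A.mem E F T → A.mem E F (c • T)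
  nrm_smul : ∀ (E F : BanachSpc.{u}) (c : ℝ) (T : E.carrier →L[ℝ] F.carrier),
    A.mem E F T → A.nrm E F (c • T) = |c| * A.nrm E F T
  add_mem : ∀ (E F : BanachSpc.{u}) (S T : E.carrier →L[ℝ] F.carrier),
    A.mem E F S → A.mem E F T → A.mem E F (S + T)
  p_triangle : ∀ (E F : BanachSpc.{u}) (S T : E.carrier →L[ℝ] F.carrier),
    A.mem E F S → A.mem E F T →
    A.nrm E F (S + T) ^ p ≤ A.nrm E F S ^ p + A.nrm E F T ^ p
  comp_mem : ∀ (E F G H : BanachSpc.{u}) (R : E.carrier →L[ℝ] F.carrier)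
    (T : F.carrier →L[ℝ] G.carrier) (S : G.carrier →L[ℝ] H.carrier),
    A.mem F G T → A.mem E H (S.comp (T.comp R))
  comp_le : ∀ (E F G H : BanachSpc.{u}) (R : E.carrier →L[ℝ] F.carrier)
    (T : F.carrier →L[ℝ] G.carrier) (S : G.carrier →L[ℝ] H.carrier),
    A.mem F G T → A.nrm E H (S.comp (T.comp R)) ≤ ‖S‖ * A.nrm F G T * ‖R‖
  complete : ∀ (E F : BanachSpc.{u}) (f : ℕ → (E.carrier →L[ℝ] F.carrier)),
    (∀ n, A.mem E F (f n)) →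
    (∀ ε > (0 : ℝ), ∃ N : ℕ, ∀ m ≥ N, ∀ n ≥ N, A.nrm E F (f m - f n) ^ p < ε) →
    ∃ T, A.mem E F T ∧ ∀ ε > (0 : ℝ), ∃ N : ℕ, ∀ n ≥ N, A.nrm E F (f n - T) ^ p < ε

namespace OperatorIdeal

/-- The product ideal `A ∘ B`. -/
def prod (A B : OperatorIdeal.{u}) : OperatorIdeal.{u} where
  mem E F T := ∃ (G : BanachSpc.{u}) (R : E.carrier →L[ℝ] G.carrier)
    (S : G.carrier →L[ℝ] F.carrier), B.mem E G R ∧ A.mem G F S ∧ T = S.comp R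
  nrm E F T := sInf { r : ℝ | ∃ (G : BanachSpc.{u}) (R : E.carrier →L[ℝ] G.carrier)
    (S : G.carrier →L[ℝ] F.carrier), B.mem E G R ∧ A.mem G F S ∧ T = S.comp R ∧
    r = A.nrm G F S * B.nrm E G R }

/-- The right-`B`-quotient `A ∘ B⁻¹`. -/
def rightQuotient (A B : OperatorIdeal.{u}) : OperatorIdeal.{u} where
  mem E F T := ∀ (G : BanachSpc.{u}) (S : G.carrier →L[ℝ] E.carrier),
    B.mem G E S → A.mem G F (T.comp S)
  nrm E F T := sSup { r : ℝ | ∃ (G : BanachSpc.{u}) (S : G.carrier →L[ℝ] E.carrier),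
    B.mem G E S ∧ B.nrm G E S = 1 ∧ r = A.nrm G F (T.comp S) }

/-- The conjugate ideal `A^Δ`, defined by trace duality against finite rank operators. -/
def conj (A : OperatorIdeal.{u}) : OperatorIdeal.{u} where
  mem E F T := ∃ c : ℝ, 0 ≤ c ∧ ∀ L : F.carrier →L[ℝ] E.carrier, FinRankOp L →
    |fTrace (T.comp L)| ≤ c * A.nrm F E L
  nrm E F T := sInf { c : ℝ | 0 ≤ c ∧ ∀ L : F.carrier →L[ℝ] E.carrier, FinRankOp L →
    |fTrace (T.comp L)| ≤ c * A.nrm F E L }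

/-- The adjoint ideal `A*`. -/
def adj (A : OperatorIdeal.{u}) : OperatorIdeal.{u} where
  mem E F T := ∃ c : ℝ, 0 ≤ c ∧ ∀ (E₀ F₀ : BanachSpc.{u})
    (B : E₀.carrier →L[ℝ] E.carrier) (S : F₀.carrier →L[ℝ] E₀.carrier)
    (A₀ : F.carrier →L[ℝ] F₀.carrier), FinRankOp B → FinRankOp A₀ → A.mem F₀ E₀ S →
    |fTrace (T.comp (B.comp (S.comp A₀)))| ≤ c * ‖B‖ * A.nrm F₀ E₀ S * ‖A₀‖
  nrm E F T := sInf { c : ℝ | 0 ≤ c ∧ ∀ (E₀ F₀ : BanachSpc.{u})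
    (B : E₀.carrier →L[ℝ] E.carrier) (S : F₀.carrier →L[ℝ] E₀.carrier)
    (A₀ : F.carrier →L[ℝ] F₀.carrier), FinRankOp B → FinRankOp A₀ → A.mem F₀ E₀ S →
    |fTrace (T.comp (B.comp (S.comp A₀)))| ≤ c * ‖B‖ * A.nrm F₀ E₀ S * ‖A₀‖ }

/-- The ideal of approximable operators, with the operator norm. -/
def approx : OperatorIdeal.{u} where
  mem E F T := ∀ ε > (0 : ℝ), ∃ L : E.carrier →L[ℝ] F.carrier, FinRankOp L ∧ ‖T - L‖ < ε
  nrm E F T := ‖T‖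

/-- The minimal kernel `A^min = F̄ ∘ A ∘ F̄`. -/
def minKer (A : OperatorIdeal.{u}) : OperatorIdeal.{u} :=
  OperatorIdeal.prod approx (OperatorIdeal.prod A approx)

/-- The injective hull `A^inj` : `T ∈ A^inj` iff `J ∘ T ∈ A` for some metric injection `J`,
with the induced infimum norm. -/
def injHull (A : OperatorIdeal.{u}) : OperatorIdeal.{u} where
  mem E F T := ∃ (G : BanachSpc.{u}) (J : F.carrier →L[ℝ] G.carrier),
    Isometry J ∧ A.mem E G (J.comp T)
  nrm E F T := sInf { r : ℝ | ∃ (G : BanachSpc.{u}) (J : F.carrier →L[ℝ] G.carrier),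
    Isometry J ∧ A.mem E G (J.comp T) ∧ r = A.nrm E G (J.comp T) }

end OperatorIdeal

/-- A finite dimensional subspace of a Banach space, as a Banach space. -/
def SubBanach (F : BanachSpc.{u}) (N : Submodule ℝ F.carrier)
    (hN : FiniteDimensional ℝ ↥N) : BanachSpc.{u} :=
  letI := hN; ⟨↥N⟩

/-- A quotient of a Banach space by a closed subspace, as a Banach space. -/
def QuotBanach (E : BanachSpc.{u}) (K : Submodule ℝ E.carrier)
    (hK : IsClosed (K : Set E.carrier)) : BanachSpc.{u} :=
  letI := hK; ⟨E.carrier ⧸ K⟩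

/-- The dual of a Banach space, as a Banach space. -/
def DualB (F : BanachSpc.{u}) : BanachSpc.{u} := ⟨StrongDual ℝ F.carrier⟩

/-- The bidual of a Banach space, as a Banach space. -/
def BidualB (F : BanachSpc.{u}) : BanachSpc.{u} := DualB (DualB F)

/-- Left accessibility of an operator ideal. -/
def LeftAccessible (A : OperatorIdeal.{u}) : Prop :=
  ∀ (E N : BanachSpc.{u}), FiniteDimensional ℝ N.carrier →
  ∀ (T : E.carrier →L[ℝ] N.carrier), ∀ ε > (0 : ℝ),
  ∃ (K : Submodule ℝ E.carrier) (hK : IsClosed (K : Set E.carrier))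
    (_ : FiniteDimensional ℝ (E.carrier ⧸ K))
    (S : (QuotBanach E K hK).carrier →L[ℝ] N.carrier),
    (∀ x : E.carrier, T x = S (Submodule.Quotient.mk x)) ∧
    A.nrm (QuotBanach E K hK) N S ≤ (1 + ε) * A.nrm E N T

/-- Right accessibility of an operator ideal. -/
def RightAccessible (A : OperatorIdeal.{u}) : Prop :=
  ∀ (M F : BanachSpc.{u}), FiniteDimensional ℝ M.carrier →
  ∀ (T : M.carrier →L[ℝ] F.carrier), ∀ ε > (0 : ℝ),
  ∃ (N : Submodule ℝ F.carrier) (hN : FiniteDimensional ℝ ↥N)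
    (S : M.carrier →L[ℝ] (SubBanach F N hN).carrier),
    (∀ x : M.carrier, T x = N.subtype (S x)) ∧
    A.nrm M (SubBanach F N hN) S ≤ (1 + ε) * A.nrm M F T

/-- Total accessibility of an operator ideal. -/
def TotallyAccessible (A : OperatorIdeal.{u}) : Prop :=
  ∀ (E F : BanachSpc.{u}) (T : E.carrier →L[ℝ] F.carrier), FinRankOp T → ∀ ε > (0 : ℝ),
  ∃ (K : Submodule ℝ E.carrier) (hK : IsClosed (K : Set E.carrier))
    (_ : FiniteDimensional ℝ (E.carrier ⧸ K))
    (N : Submodule ℝ F.carrier) (hN : FiniteDimensional ℝ ↥N)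
    (S : (QuotBanach E K hK).carrier →L[ℝ] (SubBanach F N hN).carrier),
    (∀ x : E.carrier, T x = N.subtype (S (Submodule.Quotient.mk x))) ∧
    A.nrm (QuotBanach E K hK) (SubBanach F N hN) S ≤ (1 + ε) * A.nrm E F T

/-- The `A`-extension property. -/
def ExtensionProperty (A : OperatorIdeal.{u}) : Prop :=
  ∀ ε > (0 : ℝ), ∀ (E G F : BanachSpc.{u}) (J : E.carrier →L[ℝ] G.carrier), Isometry J →
  ∀ (T : E.carrier →L[ℝ] F.carrier), A.mem E F T →
  ∃ Tt : G.carrier →L[ℝ] F.carrier, A.mem G F Tt ∧ (∀ x : E.carrier, T x = Tt (J x)) ∧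
    A.nrm G F Tt ≤ (1 + ε) * A.nrm E F T

/-- The principle of `A`-local reflexivity (`A`-LRP). -/
def LRPholds (A : OperatorIdeal.{u}) : Prop :=
  ∀ (M F : BanachSpc.{u}), FiniteDimensional ℝ M.carrier →
  ∀ (N : Submodule ℝ (StrongDual ℝ F.carrier)), FiniteDimensional ℝ ↥N →
  ∀ (T : M.carrier →L[ℝ] StrongDual ℝ (StrongDual ℝ F.carrier)), ∀ ε > (0 : ℝ),
  ∃ S : M.carrier →L[ℝ] F.carrier,
    A.nrm M F S ≤ (1 + ε) * (A.adj.adj).nrm M (BidualB F) T ∧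
    (∀ (x : M.carrier) (b : ↥N), (b : StrongDual ℝ F.carrier) (S x) = T x b) ∧
    (∀ x : M.carrier, T x ∈ Set.range (NormedSpace.inclusionInDoubleDual ℝ F.carrier) →
      NormedSpace.inclusionInDoubleDual ℝ F.carrier (S x) = T x)

/-- `A` is a maximal Banach ideal: `A = A** = (A*)*` isometrically. -/
def IsMaximalIdeal (A : OperatorIdeal.{u}) : Prop :=
  ∀ (E F : BanachSpc.{u}) (T : E.carrier →L[ℝ] F.carrier),
    (A.mem E F T ↔ (A.adj.adj).mem E F T) ∧ A.nrm E F T = (A.adj.adj).nrm E F T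

/-!
The `X`-LRP only involves the `X`-norm of operators with finite-dimensional domain and the
ideal `X**`. For `T : E → F` with `E` finite-dimensional, left accessibility factors every
finite rank `L : F → E` through a finite-dimensional quotient of `F`, losing only a factor
`1 + ε` in `A(L)`, so the trace-duality bounds defining `A^Δ(T)` and `A*(T)` are the same.
An adjoint ideal `X*` only tests `X` on the compressions `B S A₀` of operators to the
(finite-dimensional) ranges of finite rank operators, where `A^Δ` and `A*` agree; hence
`(A^Δ)* = (A*)*`.
-/

namespace LinearMap

variable {K V V' : Type*} [Field K] [AddCommGroup V] [Module K V] [AddCommGroup V'] [Module K V']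

theorem trace_restrict_range_eq_of_range_le (f : V →ₗ[K] V) {W : Submodule K V}
    [FiniteDimensional K W] (hW : range f ≤ W) :
    trace K (range f) (f.restrict fun x _ => mem_range_self f x) =
      trace K W (f.restrict fun x _ => hW (mem_range_self f x)) := by
  let toRange : W →ₗ[K] range f := codRestrict _ (f.domRestrict W) fun x => mem_range_self f x
  have hrange : f.restrict (fun x _ => mem_range_self f x) = toRange ∘ₗ Submodule.inclusion hW :=
    rfl
  have hW' : f.restrict (fun x _ => hW (mem_range_self f x)) = Submodule.inclusion hW ∘ₗ toRange :=
    rfl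
  have : FiniteDimensional K (range f) := Submodule.finiteDimensional_of_le hW
  rw [hrange, hW', trace_comp_comm']

theorem trace_restrict_range_comp_comm (f : V →ₗ[K] V') (g : V' →ₗ[K] V)
    [FiniteDimensional K (range g)] :
    trace K (range (f ∘ₗ g)) ((f ∘ₗ g).restrict fun x _ => mem_range_self _ x) =
      trace K (range (g ∘ₗ f)) ((g ∘ₗ f).restrict fun x _ => mem_range_self _ x) := by
  rw [trace_restrict_range_eq_of_range_le (f ∘ₗ g) (range_comp g f).le,
    trace_restrict_range_eq_of_range_le (g ∘ₗ f) (range_comp_le_range f g)]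
  let a : range g →ₗ[K] (range g).map f := f.submoduleMap (range g)
  let b : (range g).map f →ₗ[K] range g :=
    codRestrict _ (g.domRestrict _) fun x => mem_range_self g x
  exact trace_comp_comm' b a

end LinearMap

theorem exists_norm_trace_le (𝕜 W : Type*) [NontriviallyNormedField 𝕜] [CompleteSpace 𝕜]
    [NormedAddCommGroup W] [NormedSpace 𝕜 W] [FiniteDimensional 𝕜 W] :
    ∃ C, 0 ≤ C ∧ ∀ f : W →L[𝕜] W, ‖LinearMap.trace 𝕜 W f‖ ≤ C * ‖f‖ := by
  let tr : StrongDual 𝕜 (W →L[𝕜] W) :=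
    LinearMap.toContinuousLinearMap ((LinearMap.trace 𝕜 W).comp (ContinuousLinearMap.coeLM 𝕜))
  exact ⟨‖tr‖, norm_nonneg _, tr.le_opNorm⟩

theorem ContinuousLinearMap.norm_codRestrict_le {𝕜 V W : Type*} [NontriviallyNormedField 𝕜]
    [SeminormedAddCommGroup V] [NormedSpace 𝕜 V] [SeminormedAddCommGroup W] [NormedSpace 𝕜 W]
    (f : V →L[𝕜] W) (p : Submodule 𝕜 W) (h : ∀ x, f x ∈ p) : ‖f.codRestrict p h‖ ≤ ‖f‖ :=
  opNorm_le_bound _ (norm_nonneg f) f.le_opNorm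

open Filter Topology in
theorem le_of_forall_pos_le_one_add_mul {x y : ℝ} (h : ∀ ε > 0, x ≤ (1 + ε) * y) : x ≤ y := by
  have hlim : Tendsto (fun ε : ℝ => (1 + ε) * y) (𝓝[>] 0) (𝓝 y) := by
    have hcont : Continuous fun ε : ℝ => (1 + ε) * y := by fun_prop
    simpa using (hcont.tendsto 0).mono_left nhdsWithin_le_nhds
  exact ge_of_tendsto hlim (eventually_nhdsWithin_of_forall h)

section FiniteRank

variable {E F G : BanachSpc.{u}}

theorem FinRankOp.clm_comp {T : E.carrier →L[ℝ] F.carrier} (hT : FinRankOp T)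
    (S : F.carrier →L[ℝ] G.carrier) : FinRankOp (S.comp T) := by
  unfold FinRankOp at *
  rw [ContinuousLinearMap.toLinearMap_comp, LinearMap.range_comp]
  infer_instance

theorem FinRankOp.comp_clm {S : F.carrier →L[ℝ] G.carrier} (hS : FinRankOp S)
    (T : E.carrier →L[ℝ] F.carrier) : FinRankOp (S.comp T) := by
  unfold FinRankOp at *
  exact Submodule.finiteDimensional_of_le (LinearMap.range_comp_le_range _ _)

theorem finRankOp_of_finiteDimensional_domain [FiniteDimensional ℝ E.carrier]
    (T : E.carrier →L[ℝ] F.carrier) : FinRankOp T :=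
  LinearMap.finiteDimensional_range _

theorem finRankOp_of_finiteDimensional_codomain [FiniteDimensional ℝ F.carrier]
    (T : E.carrier →L[ℝ] F.carrier) : FinRankOp T :=
  Submodule.finiteDimensional_of_le le_top

theorem fTrace_eq_trace_restrict (T : E.carrier →L[ℝ] E.carrier) {W : Submodule ℝ E.carrier}
    [FiniteDimensional ℝ W] (hW : LinearMap.range (T : E.carrier →ₗ[ℝ] E.carrier) ≤ W) :
    fTrace T = LinearMap.trace ℝ W
      ((T : E.carrier →ₗ[ℝ] E.carrier).restrict fun x _ => hW (LinearMap.mem_range_self _ x)) :=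
  LinearMap.trace_restrict_range_eq_of_range_le _ hW

theorem fTrace_comp_comm (U : E.carrier →L[ℝ] F.carrier) (V : F.carrier →L[ℝ] E.carrier)
    (hV : FinRankOp V) : fTrace (U.comp V) = fTrace (V.comp U) := by
  unfold FinRankOp at hV
  exact LinearMap.trace_restrict_range_comp_comm (U : E.carrier →ₗ[ℝ] F.carrier) V

theorem exists_abs_fTrace_comp_le (T : E.carrier →L[ℝ] F.carrier) (hT : FinRankOp T) :
    ∃ C, 0 ≤ C ∧ ∀ L : F.carrier →L[ℝ] E.carrier, |fTrace (T.comp L)| ≤ C * ‖L‖ := by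
  unfold FinRankOp at hT
  set W := LinearMap.range (T : E.carrier →ₗ[ℝ] F.carrier)
  obtain ⟨C, hC0, hC⟩ := exists_norm_trace_le ℝ W
  refine ⟨C * ‖T‖, by positivity, fun L => ?_⟩
  let R : W →L[ℝ] W :=
    ((T.comp L).comp W.subtypeL).codRestrict W fun x => LinearMap.mem_range_self _ _
  have hR : ‖R‖ ≤ ‖T‖ * ‖L‖ := by
    refine ContinuousLinearMap.opNorm_le_bound _ (by positivity) fun x => ?_
    calc ‖R x‖ = ‖T (L x)‖ := rfl
      _ ≤ ‖T‖ * ‖L‖ * ‖x‖ := by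
        rw [mul_assoc]
        exact (T.le_opNorm _).trans (by gcongr; exact L.le_opNorm _)
  have htr : fTrace (T.comp L) = LinearMap.trace ℝ W R :=
    fTrace_eq_trace_restrict _ (LinearMap.range_comp_le_range _ _)
  calc |fTrace (T.comp L)| = ‖LinearMap.trace ℝ W R‖ := by rw [htr, Real.norm_eq_abs]
    _ ≤ C * (‖T‖ * ‖L‖) := (hC R).trans (by gcongr)
    _ = C * ‖T‖ * ‖L‖ := by ring

end FiniteRank

namespace OperatorIdeal

section Bounds

variable (X : OperatorIdeal.{u}) {E F : BanachSpc.{u}}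

/- The admissible constants of `adj` and `conj`: `X.adj.nrm E F T` is definitionally
`sInf (X.adjBounds T)` and `X.adj.mem E F T` is `(X.adjBounds T).Nonempty`. -/
def adjBounds (T : E.carrier →L[ℝ] F.carrier) : Set ℝ :=
  { c : ℝ | 0 ≤ c ∧ ∀ (E₀ F₀ : BanachSpc.{u})
    (B : E₀.carrier →L[ℝ] E.carrier) (S : F₀.carrier →L[ℝ] E₀.carrier)
    (A₀ : F.carrier →L[ℝ] F₀.carrier), FinRankOp B → FinRankOp A₀ → X.mem F₀ E₀ S →
    |fTrace (T.comp (B.comp (S.comp A₀)))| ≤ c * ‖B‖ * X.nrm F₀ E₀ S * ‖A₀‖ }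

def conjBounds (T : E.carrier →L[ℝ] F.carrier) : Set ℝ :=
  { c : ℝ | 0 ≤ c ∧ ∀ L : F.carrier →L[ℝ] E.carrier, FinRankOp L →
    |fTrace (T.comp L)| ≤ c * X.nrm F E L }

theorem bddBelow_adjBounds (T : E.carrier →L[ℝ] F.carrier) : BddBelow (X.adjBounds T) :=
  ⟨0, fun _ hc => hc.1⟩

theorem adj_nrm_nonneg (T : E.carrier →L[ℝ] F.carrier) : 0 ≤ X.adj.nrm E F T :=
  Real.sInf_nonneg fun _ hc => hc.1

end Bounds

theorem adj_eq_adj_of_adjBounds_eq {X Y : OperatorIdeal.{u}}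
    (h : ∀ (E F : BanachSpc.{u}) (T : E.carrier →L[ℝ] F.carrier), X.adjBounds T = Y.adjBounds T) :
    X.adj = Y.adj := by
  change OperatorIdeal.mk _ _ = OperatorIdeal.mk _ _
  congr 1 <;> funext E F T
  · exact congrArg Set.Nonempty (h E F T)
  · exact congrArg sInf (h E F T)

section Composition

variable {X : OperatorIdeal.{u}} {E F G H : BanachSpc.{u}}

theorem mul_mem_adjBounds_comp (hX : ∀ E F T, 0 ≤ X.nrm E F T) {S : F.carrier →L[ℝ] G.carrier}
    {c : ℝ} (hc : c ∈ X.adjBounds S) (R : E.carrier →L[ℝ] F.carrier)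
    (P : G.carrier →L[ℝ] H.carrier) :
    ‖P‖ * c * ‖R‖ ∈ X.adjBounds (P.comp (S.comp R)) := by
  obtain ⟨hc0, hc⟩ := hc
  refine ⟨by positivity, fun E₁ F₁ B S₁ A₁ hB hA₁ hS₁ => ?_⟩
  have hcycle : fTrace ((P.comp (S.comp R)).comp (B.comp (S₁.comp A₁))) =
      fTrace (S.comp ((R.comp B).comp (S₁.comp (A₁.comp P)))) :=
    fTrace_comp_comm P ((S.comp R).comp (B.comp (S₁.comp A₁)))
      ((hB.comp_clm _).clm_comp _)
  rw [hcycle]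
  calc _ ≤ c * ‖R.comp B‖ * X.nrm F₁ E₁ S₁ * ‖A₁.comp P‖ :=
        hc E₁ F₁ (R.comp B) S₁ (A₁.comp P) (hB.clm_comp R) (hA₁.comp_clm P) hS₁
    _ ≤ c * (‖R‖ * ‖B‖) * X.nrm F₁ E₁ S₁ * (‖A₁‖ * ‖P‖) := by
        have := hX F₁ E₁ S₁
        gcongr <;> exact ContinuousLinearMap.opNorm_comp_le _ _
    _ = ‖P‖ * c * ‖R‖ * ‖B‖ * X.nrm F₁ E₁ S₁ * ‖A₁‖ := by ring

open scoped Pointwise in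
theorem adj_nrm_comp_le (hX : ∀ E F T, 0 ≤ X.nrm E F T) {S : F.carrier →L[ℝ] G.carrier}
    (hS : X.adj.mem F G S) (R : E.carrier →L[ℝ] F.carrier) (P : G.carrier →L[ℝ] H.carrier) :
    X.adj.nrm E H (P.comp (S.comp R)) ≤ ‖P‖ * X.adj.nrm F G S * ‖R‖ := by
  have hPR : 0 ≤ ‖P‖ * ‖R‖ := by positivity
  calc X.adj.nrm E H (P.comp (S.comp R)) = sInf (X.adjBounds (P.comp (S.comp R))) := rfl
    _ ≤ sInf ((‖P‖ * ‖R‖) • X.adjBounds S) := by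
        refine csInf_le_csInf (X.bddBelow_adjBounds _)
          (Set.Nonempty.smul_set (s := X.adjBounds S) hS) ?_
        rintro _ ⟨c, hc, rfl⟩
        convert mul_mem_adjBounds_comp hX hc R P using 1
        exact mul_right_comm _ _ _
    _ = ‖P‖ * X.adj.nrm F G S * ‖R‖ := by
        rw [Real.sInf_smul_of_nonneg hPR, smul_eq_mul]
        change _ * X.adj.nrm F G S = _
        ring

end Composition

section Comparison

variable {X Y : OperatorIdeal.{u}} {E F : BanachSpc.{u}}

theorem adjBounds_subset_of_le
    (hXY : ∀ E F T, X.mem E F T → Y.mem E F T ∧ Y.nrm E F T ≤ X.nrm E F T)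
    (T : E.carrier →L[ℝ] F.carrier) : Y.adjBounds T ⊆ X.adjBounds T := by
  rintro c ⟨hc0, hc⟩
  refine ⟨hc0, fun E₀ F₀ B S A₀ hB hA₀ hS => ?_⟩
  obtain ⟨hSY, hle⟩ := hXY F₀ E₀ S hS
  exact (hc E₀ F₀ B S A₀ hB hA₀ hSY).trans (by gcongr)

theorem adjBounds_subset_of_finiteDimensional (hY : ∀ E F T, 0 ≤ Y.nrm E F T)
    (hY_comp : ∀ {E F G H : BanachSpc.{u}} (R : E.carrier →L[ℝ] F.carrier)
      {S : F.carrier →L[ℝ] G.carrier} (P : G.carrier →L[ℝ] H.carrier),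
      Y.mem F G S → Y.nrm E H (P.comp (S.comp R)) ≤ ‖P‖ * Y.nrm F G S * ‖R‖)
    (hfin : ∀ (E F : BanachSpc.{u}) (T : E.carrier →L[ℝ] F.carrier),
      FiniteDimensional ℝ E.carrier → FiniteDimensional ℝ F.carrier →
      X.mem E F T ∧ X.nrm E F T = Y.nrm E F T)
    (T : E.carrier →L[ℝ] F.carrier) : X.adjBounds T ⊆ Y.adjBounds T := by
  rintro c ⟨hc0, hc⟩
  refine ⟨hc0, fun E₀ F₀ B S A₀ hB hA₀ hS => ?_⟩
  unfold FinRankOp at hB hA₀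
  let RB := SubBanach E _ hB
  let RA := SubBanach F₀ _ hA₀
  have : FiniteDimensional ℝ RB.carrier := hB
  have : FiniteDimensional ℝ RA.carrier := hA₀
  let ιB : RB.carrier →L[ℝ] E.carrier := Submodule.subtypeL _
  let ιA : RA.carrier →L[ℝ] F₀.carrier := Submodule.subtypeL _
  let B₀ : E₀.carrier →L[ℝ] RB.carrier := B.rangeRestrict
  let A₀' : F.carrier →L[ℝ] RA.carrier := A₀.rangeRestrict
  let S' : RA.carrier →L[ℝ] RB.carrier := B₀.comp (S.comp ιA)
  obtain ⟨hS'X, hS'nrm⟩ := hfin RA RB S' ‹_› ‹_›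
  have hS' : Y.nrm RA RB S' ≤ ‖B‖ * Y.nrm F₀ E₀ S :=
    calc Y.nrm RA RB S' ≤ ‖B₀‖ * Y.nrm F₀ E₀ S * ‖ιA‖ := hY_comp ιA B₀ hS
      _ ≤ ‖B‖ * Y.nrm F₀ E₀ S * 1 := by
          have := hY F₀ E₀ S
          gcongr
          · exact B.norm_codRestrict_le _ _
          · exact Submodule.norm_subtypeL_le _
      _ = ‖B‖ * Y.nrm F₀ E₀ S := mul_one _
  have hfactor : B.comp (S.comp A₀) = ιB.comp (S'.comp A₀') := rfl
  rw [hfactor]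
  calc _ ≤ c * ‖ιB‖ * X.nrm RA RB S' * ‖A₀'‖ :=
        hc RB RA ιB S' A₀' (finRankOp_of_finiteDimensional_domain ιB)
          (finRankOp_of_finiteDimensional_codomain A₀') hS'X
    _ ≤ c * 1 * (‖B‖ * Y.nrm F₀ E₀ S) * ‖A₀‖ := by
        rw [hS'nrm]
        have := hY F₀ E₀ S
        have := hY RA RB S'
        gcongr
        · exact Submodule.norm_subtypeL_le (LinearMap.range (B : E₀.carrier →ₗ[ℝ] E.carrier))
        · exact A₀.norm_codRestrict_le _ _
    _ = c * ‖B‖ * Y.nrm F₀ E₀ S * ‖A₀‖ := by ring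

theorem adj_eq_adj_of_le_of_eq_on_finiteDimensional
    (hXY : ∀ E F T, X.mem E F T → Y.mem E F T ∧ Y.nrm E F T ≤ X.nrm E F T)
    (hY : ∀ E F T, 0 ≤ Y.nrm E F T)
    (hY_comp : ∀ {E F G H : BanachSpc.{u}} (R : E.carrier →L[ℝ] F.carrier)
      {S : F.carrier →L[ℝ] G.carrier} (P : G.carrier →L[ℝ] H.carrier),
      Y.mem F G S → Y.nrm E H (P.comp (S.comp R)) ≤ ‖P‖ * Y.nrm F G S * ‖R‖)
    (hfin : ∀ (E F : BanachSpc.{u}) (T : E.carrier →L[ℝ] F.carrier),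
      FiniteDimensional ℝ E.carrier → FiniteDimensional ℝ F.carrier →
      X.mem E F T ∧ X.nrm E F T = Y.nrm E F T) :
    X.adj = Y.adj :=
  adj_eq_adj_of_adjBounds_eq fun _ _ T =>
    (adjBounds_subset_of_finiteDimensional hY hY_comp hfin T).antisymm
      (adjBounds_subset_of_le hXY T)

end Comparison

section ConjugateAndAdjoint

variable {A : OperatorIdeal.{u}} {p : ℝ} {E F : BanachSpc.{u}}

theorem conj_mem_of_finRankOp (hA : IsPBanachIdeal p A) {T : E.carrier →L[ℝ] F.carrier}
    (hT : FinRankOp T) : A.conj.mem E F T := by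
  obtain ⟨C, hC0, hC⟩ := exists_abs_fTrace_comp_le T hT
  exact ⟨C, hC0, fun L hL =>
    (hC L).trans (by gcongr; exact hA.opnorm_le F E L (hA.finrank_mem F E L hL))⟩

theorem conjBounds_subset_adjBounds (hA : IsPBanachIdeal p A) (T : E.carrier →L[ℝ] F.carrier) :
    A.conjBounds T ⊆ A.adjBounds T := by
  rintro c ⟨hc0, hc⟩
  refine ⟨hc0, fun E₀ F₀ B S A₀ hB _ hS => ?_⟩
  calc _ ≤ c * A.nrm F E (B.comp (S.comp A₀)) := hc _ (hB.comp_clm _)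
    _ ≤ c * (‖B‖ * A.nrm F₀ E₀ S * ‖A₀‖) := by
        gcongr
        exact hA.comp_le F F₀ E₀ E A₀ S B hS
    _ = c * ‖B‖ * A.nrm F₀ E₀ S * ‖A₀‖ := by ring

theorem adj_mem_of_conj_mem (hA : IsPBanachIdeal p A) {T : E.carrier →L[ℝ] F.carrier}
    (h : A.conj.mem E F T) : A.adj.mem E F T :=
  Set.Nonempty.mono (conjBounds_subset_adjBounds hA T) h

theorem adj_nrm_le_conj_nrm (hA : IsPBanachIdeal p A) {T : E.carrier →L[ℝ] F.carrier}
    (h : A.conj.mem E F T) : A.adj.nrm E F T ≤ A.conj.nrm E F T :=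
  csInf_le_csInf (A.bddBelow_adjBounds T) h (conjBounds_subset_adjBounds hA T)

theorem adjBounds_subset_conjBounds (hA : IsPBanachIdeal p A) (hla : LeftAccessible A)
    [FiniteDimensional ℝ E.carrier] (T : E.carrier →L[ℝ] F.carrier) :
    A.adjBounds T ⊆ A.conjBounds T := by
  rintro c ⟨hc0, hc⟩
  refine ⟨hc0, fun L _ => le_of_forall_pos_le_one_add_mul fun ε hε => ?_⟩
  obtain ⟨K, hK, hK_fin, L', hL, hL'⟩ := hla F E ‹_› L ε hε
  let Q := QuotBanach F K hK
  have : FiniteDimensional ℝ Q.carrier := hK_fin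
  let q : F.carrier →L[ℝ] Q.carrier :=
    LinearMap.mkContinuous K.mkQ 1 fun x =>
      (Submodule.Quotient.norm_mk_le K x).trans_eq (one_mul _).symm
  have hq : ‖q‖ ≤ 1 := LinearMap.mkContinuous_norm_le _ zero_le_one _
  have hfactor : L = (ContinuousLinearMap.id ℝ E.carrier).comp (L'.comp q) := by
    ext x
    exact hL x
  have := hA.nonneg Q E L'
  have := hA.nonneg F E L
  calc |fTrace (T.comp L)| ≤ c * ‖ContinuousLinearMap.id ℝ E.carrier‖ * A.nrm Q E L' * ‖q‖ := by
        rw [hfactor]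
        exact hc E Q _ L' q (finRankOp_of_finiteDimensional_domain _)
          (finRankOp_of_finiteDimensional_codomain q)
          (hA.finrank_mem _ _ _ (finRankOp_of_finiteDimensional_codomain L'))
    _ ≤ c * 1 * ((1 + ε) * A.nrm F E L) * 1 := by
        gcongr
        exact ContinuousLinearMap.norm_id_le
    _ = (1 + ε) * (c * A.nrm F E L) := by ring

theorem conj_nrm_eq_adj_nrm (hA : IsPBanachIdeal p A) (hla : LeftAccessible A)
    [FiniteDimensional ℝ E.carrier] (T : E.carrier →L[ℝ] F.carrier) :
    A.conj.nrm E F T = A.adj.nrm E F T :=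
  congrArg sInf
    ((conjBounds_subset_adjBounds hA T).antisymm (adjBounds_subset_conjBounds hA hla T))

theorem conj_adj_eq_adj_adj (hA : IsPBanachIdeal p A) (hla : LeftAccessible A) :
    A.conj.adj = A.adj.adj :=
  adj_eq_adj_of_le_of_eq_on_finiteDimensional
    (fun _ _ _ h => ⟨adj_mem_of_conj_mem hA h, adj_nrm_le_conj_nrm hA h⟩)
    (fun _ _ => A.adj_nrm_nonneg)
    (fun R _ P hS => adj_nrm_comp_le hA.nonneg hS R P)
    (fun _ _ T _ _ => ⟨conj_mem_of_finRankOp hA (finRankOp_of_finiteDimensional_domain T),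
      conj_nrm_eq_adj_nrm hA hla T⟩)

end ConjugateAndAdjoint

end OperatorIdeal

theorem LRPholds.of_nrm_eq_of_adj_adj_eq {X Y : OperatorIdeal.{u}}
    (hfin : ∀ (M F : BanachSpc.{u}) (S : M.carrier →L[ℝ] F.carrier),
      FiniteDimensional ℝ M.carrier → X.nrm M F S = Y.nrm M F S)
    (hadj : X.adj.adj = Y.adj.adj) (h : LRPholds X) : LRPholds Y := by
  intro M F hM N hN T ε hε
  obtain ⟨S, hS, hSN, hSj⟩ := h M F hM N hN T ε hε
  exact ⟨S, by rwa [← hfin M F S hM, ← hadj], hSN, hSj⟩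

/-- for a left accessible Banach ideal `A`, the `A^Δ`-LRP holds iff the
`A*`-LRP holds. -/
theorem conj_lrp_iff_adj_lrp (A : OperatorIdeal.{u}) (hA : IsPBanachIdeal 1 A)
    (hla : LeftAccessible A) :
    LRPholds A.conj ↔ LRPholds A.adj := by
  have hfin : ∀ (M F : BanachSpc.{u}) (S : M.carrier →L[ℝ] F.carrier),
      FiniteDimensional ℝ M.carrier → A.conj.nrm M F S = A.adj.nrm M F S :=
    fun _ _ S _ => OperatorIdeal.conj_nrm_eq_adj_nrm hA hla S
  have hadj : A.conj.adj.adj = A.adj.adj.adj :=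
    congrArg OperatorIdeal.adj (OperatorIdeal.conj_adj_eq_adj_adj hA hla)
  exact ⟨.of_nrm_eq_of_adj_adj_eq hfin hadj,
    .of_nrm_eq_of_adj_adj_eq (fun M F S hM => (hfin M F S hM).symm) hadj.symm⟩
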